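/- arXiv:2402.16744 — 4 statements merged into one kernel-verified Lean document; each statement's English description precedes it below -/
import Mathlib

section
/- For each n ∈ ℤ₊ let φₙ : ℝ → ℂ be continuously differentiable with φₙ ∈ L¹(ℝ), φₙ′ ∈ L¹(ℝ), and φₙ(x) → 0 as |x| → ∞. Suppose there are real numbers bₙ > 0 and cₙ ∈ ℝ (with b₋₁ = 0) such that φₙ′ = −bₙ₋₁φₙ₋₁ + i cₙ φₙ + bₙ φₙ₊₁ for every n ∈ ℤ₊. Define ϑₙ(ξ) = (−i)ⁿ φ̂ₙ(ξ), where φ̂(ξ) = (2π)^{−1/2} ∫_ℝ φ(x) e^{−iξx} dx is the unitary Fourier transform. Then for every ξ ∈ ℝ and every n ∈ ℤ₊ the three-term recurrence bₙ ϑₙ₊₁(ξ) = (ξ − cₙ) ϑₙ(ξ) − bₙ₋₁ ϑₙ₋₁(ξ) holds (with ϑ₋₁ := 0). -/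
/-!
The Fourier transform turns differentiation into multiplication by `iξ` (for `φ, φ' ∈ L¹`, the
boundary terms vanish automatically). Transforming the T-system relation therefore gives
`bₙ φ̂ₙ₊₁ = i (ξ - cₙ) φ̂ₙ + bₙ₋₁ φ̂ₙ₋₁`, and multiplying by `(-i)ⁿ⁺¹` turns this into the
three-term recurrence for `ϑₙ = (-i)ⁿ φ̂ₙ`.
-/

open MeasureTheory Filter

noncomputable def unitaryFourier (φ : ℝ → ℂ) (ξ : ℝ) : ℂ :=
  ((Real.sqrt (2 * Real.pi) : ℂ))⁻¹ * ∫ x : ℝ, φ x * Complex.exp (-Complex.I * ξ * x)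

open Complex FourierTransform

lemma norm_exp_neg_I_mul_ofReal_mul (ξ x : ℝ) : ‖exp (-I * ξ * x)‖ = 1 := by
  have : -I * ξ * x = ((-(ξ * x) : ℝ) : ℂ) * I := by push_cast; ring
  rw [this, norm_exp_ofReal_mul_I]

lemma MeasureTheory.Integrable.mul_exp_neg_I_mul {f : ℝ → ℂ} (hf : Integrable f) (ξ : ℝ) :
    Integrable fun x : ℝ => f x * exp (-I * ξ * x) :=
  hf.mul_bdd (by fun_prop) (.of_forall fun x => (norm_exp_neg_I_mul_ofReal_mul ξ x).le)

lemma unitaryFourier_add {f g : ℝ → ℂ} (hf : Integrable f) (hg : Integrable g) (ξ : ℝ) :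
    unitaryFourier (fun x => f x + g x) ξ = unitaryFourier f ξ + unitaryFourier g ξ := by
  simp only [unitaryFourier, add_mul]
  rw [integral_add (hf.mul_exp_neg_I_mul ξ) (hg.mul_exp_neg_I_mul ξ), mul_add]

lemma unitaryFourier_const_mul (a : ℂ) (f : ℝ → ℂ) (ξ : ℝ) :
    unitaryFourier (fun x => a * f x) ξ = a * unitaryFourier f ξ := by
  simp only [unitaryFourier, mul_assoc, integral_const_mul]
  ring

lemma unitaryFourier_eq_fourier (f : ℝ → ℂ) (ξ : ℝ) :
    unitaryFourier f ξ = (Real.sqrt (2 * Real.pi) : ℂ)⁻¹ * 𝓕 f (ξ / (2 * Real.pi)) := by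
  rw [unitaryFourier, Real.fourier_real_eq_integral_exp_smul]
  congr 2 with x
  rw [smul_eq_mul, mul_comm]
  congr 1
  push_cast
  field_simp

lemma unitaryFourier_deriv {f f' : ℝ → ℂ} (hf : ∀ x, HasDerivAt f (f' x) x)
    (hfi : Integrable f) (hf'i : Integrable f') (ξ : ℝ) :
    unitaryFourier f' ξ = I * ξ * unitaryFourier f ξ := by
  have hderiv : deriv f = f' := funext fun x => (hf x).deriv
  have hfourier_deriv :=
    Real.fourier_deriv hfi (fun x => (hf x).differentiableAt) (hderiv ▸ hf'i)
  rw [hderiv] at hfourier_deriv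
  simp only [unitaryFourier_eq_fourier, hfourier_deriv, smul_eq_mul]
  push_cast
  field_simp

theorem tSystem_fourierTransform_threeTermRecurrence_general
    (φ φ' : ℕ → ℝ → ℂ) (b c : ℕ → ℝ)
    (hderiv : ∀ n, ∀ x : ℝ, HasDerivAt (φ n) (φ' n x) x)
    (hint : ∀ n, Integrable (φ n))
    (hint' : ∀ n, Integrable (φ' n))
    (hrel : ∀ n, ∀ x : ℝ, φ' n x
      = -(if n = 0 then (0 : ℂ) else (b (n - 1) : ℂ)) * φ (n - 1) x
        + Complex.I * (c n : ℂ) * φ n x + (b n : ℂ) * φ (n + 1) x) :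
    ∀ (ξ : ℝ) (n : ℕ),
      (b n : ℂ) * ((-Complex.I) ^ (n + 1) * unitaryFourier (φ (n + 1)) ξ)
        = ((ξ : ℂ) - (c n : ℂ)) * ((-Complex.I) ^ n * unitaryFourier (φ n) ξ)
          - (if n = 0 then (0 : ℂ)
              else (b (n - 1) : ℂ) * ((-Complex.I) ^ (n - 1) * unitaryFourier (φ (n - 1)) ξ)) := by
  intro ξ n
  have hfourier := unitaryFourier_deriv (hderiv n) (hint n) (hint' n) ξ
  rw [funext (hrel n), unitaryFourier_add, unitaryFourier_add, unitaryFourier_const_mul,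
    unitaryFourier_const_mul, unitaryFourier_const_mul] at hfourier
  any_goals exact (hint _).const_mul _
  any_goals exact ((hint _).const_mul _).add ((hint _).const_mul _)
  rcases n with _ | m
  · simp only [if_true, pow_zero] at hfourier ⊢
    linear_combination (-I) * hfourier + (c 0 - ξ) * unitaryFourier (φ 0) ξ * I_sq
  · simp only [Nat.add_one_ne_zero, if_false, Nat.add_sub_cancel, pow_succ] at hfourier ⊢
    linear_combination
      -(-I) ^ m * hfourier + b (m + 1) * (-I) ^ m * unitaryFourier (φ (m + 2)) ξ * I_sq

/-- if `{φₙ}` are `C¹`, integrable with integrable derivatives, vanishing at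
`±∞`, and satisfy the T-system relation `φₙ′ = −bₙ₋₁φₙ₋₁ + i cₙ φₙ + bₙ φₙ₊₁` with real
`bₙ > 0`, `cₙ ∈ ℝ` (and `b₋₁ = 0`), then `ϑₙ(ξ) = (−i)ⁿ φ̂ₙ(ξ)` satisfies the three-term
recurrence `bₙ ϑₙ₊₁(ξ) = (ξ − cₙ) ϑₙ(ξ) − bₙ₋₁ ϑₙ₋₁(ξ)` (with `ϑ₋₁ := 0`). -/
theorem tSystem_fourierTransform_threeTermRecurrence
    (φ φ' : ℕ → ℝ → ℂ) (b c : ℕ → ℝ)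
    (hderiv : ∀ n, ∀ x : ℝ, HasDerivAt (φ n) (φ' n x) x)
    (hcont : ∀ n, Continuous (φ' n))
    (hint : ∀ n, Integrable (φ n))
    (hint' : ∀ n, Integrable (φ' n))
    (hdecay : ∀ n, Tendsto (φ n) (cocompact ℝ) (nhds 0))
    (hb : ∀ n, 0 < b n)
    (hrel : ∀ n, ∀ x : ℝ, φ' n x
      = -(if n = 0 then (0 : ℂ) else (b (n - 1) : ℂ)) * φ (n - 1) x
        + Complex.I * (c n : ℂ) * φ n x + (b n : ℂ) * φ (n + 1) x) :
    ∀ (ξ : ℝ) (n : ℕ),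
      (b n : ℂ) * ((-Complex.I) ^ (n + 1) * unitaryFourier (φ (n + 1)) ξ)
        = ((ξ : ℂ) - (c n : ℂ)) * ((-Complex.I) ^ n * unitaryFourier (φ n) ξ)
          - (if n = 0 then (0 : ℂ)
              else (b (n - 1) : ℂ) * ((-Complex.I) ^ (n - 1) * unitaryFourier (φ (n - 1)) ξ)) :=
  tSystem_fourierTransform_threeTermRecurrence_general φ φ' b c hderiv hint hint' hrel
end

section
/- Let I ⊆ ℝ be an open interval and a ∈ I. For each n ∈ ℤ₊ let φₙ : I → ℂ be infinitely differentiable, and suppose there exist bₙ ∈ ℂ (with b₋₁ = 0) and cₙ ∈ ℝ such that φₙ′ = −bₙ₋₁ φₙ₋₁ + i cₙ φₙ + conj(bₙ) φₙ₊₁ on I for every n ∈ ℤ₊. If φₙ(a) = 0 for every n ∈ ℤ₊, then all derivatives vanish at a: φₙ^{(ℓ)}(a) = 0 for every n ∈ ℤ₊ and every ℓ ∈ ℤ₊. Consequently, if in addition some φₙ is real-analytic at a, then φₙ vanishes identically on a neighbourhood of a. -/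
open Filter

/-- If all iterated derivatives of an analytic function vanish at a point, the function vanishes
in a neighbourhood. -/
lemma analyticAt_eventually_zero_of_iteratedDeriv_zero {f : ℝ → ℂ} {a : ℝ}
    (hf : AnalyticAt ℝ f a) (h : ∀ ℓ : ℕ, iteratedDeriv ℓ f a = 0) :
    ∀ᶠ x in nhds a, f x = 0 := by
  obtain ⟨p, hp⟩ := hf
  obtain ⟨r, hr⟩ := hp
  have key : ∀ y ∈ EMetric.ball (0 : ℝ) r, f (a + y) = 0 := by
    intro y hy
    have hs := hr.hasSum_iteratedFDeriv hy
    have hz : (fun n : ℕ => ((n.factorial : ℝ))⁻¹ • iteratedFDeriv ℝ n f a fun _ => y)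
        = fun _ => (0 : ℂ) := by
      funext n
      have hz' : (iteratedFDeriv ℝ n f a : (Fin n → ℝ) → ℂ) (fun _ => y) = 0 := by
        rw [iteratedFDeriv_apply_eq_iteratedDeriv_mul_prod, h n, smul_zero]
      rw [hz', smul_zero]
    rw [hz] at hs
    simpa using hs.unique hasSum_zero
  have hr0 := hr.r_pos
  filter_upwards [EMetric.ball_mem_nhds a hr0] with x hx
  have : x - a ∈ Metric.eball (0 : ℝ) r := by
    simpa [Metric.mem_eball, edist_eq_enorm_sub] using hx
  simpa using key (x - a) this

/-- for a smooth system `{φₙ}` on an open interval `I` satisfying the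
tridiagonal skew-Hermitian differentiation relation, if all `φₙ` vanish at some `a ∈ I`,
then all derivatives of all `φₙ` vanish at `a`; consequently any `φₙ` that is real-analytic
at `a` vanishes identically on a neighbourhood of `a`. -/
theorem tSystem_dirichlet_all_derivatives_vanish
    (I : Set ℝ) (hIopen : IsOpen I) (hIconn : I.OrdConnected) (a : ℝ) (ha : a ∈ I)
    (φ : ℕ → ℝ → ℂ) (hsmooth : ∀ n, ContDiffOn ℝ (⊤ : ℕ∞) (φ n) I)
    (b : ℕ → ℂ) (c : ℕ → ℝ)
    (hφ : ∀ n, ∀ x ∈ I, HasDerivAt (φ n)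
      (-(if n = 0 then (0 : ℂ) else b (n - 1)) * φ (n - 1) x
        + Complex.I * (c n : ℂ) * φ n x
        + (starRingEnd ℂ) (b n) * φ (n + 1) x) x)
    (hzero : ∀ n, φ n a = 0) :
    (∀ n ℓ : ℕ, iteratedDeriv ℓ (φ n) a = 0) ∧
      ∀ n, AnalyticAt ℝ (φ n) a → ∀ᶠ x in nhds a, φ n x = 0 := by
  have hU : UniqueDiffOn ℝ I := hIopen.uniqueDiffOn
  have key : ∀ ℓ n : ℕ, iteratedDerivWithin ℓ (φ n) I a = 0 := by
    intro ℓ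
    induction ℓ with
    | zero => intro n; simpa using hzero n
    | succ ℓ ih =>
      intro n
      rw [iteratedDerivWithin_succ']
      set A : ℂ := -(if n = 0 then (0 : ℂ) else b (n - 1)) with hA
      set B : ℂ := Complex.I * (c n : ℂ) with hB
      set C : ℂ := (starRingEnd ℂ) (b n) with hC
      have hEq : Set.EqOn (derivWithin (φ n) I)
          ((fun y => A • φ (n - 1) y) + fun y => B • φ n y + C • φ (n + 1) y) I := by
        intro x hx
        have hd := (hφ n x hx).deriv
        rw [derivWithin_of_isOpen hIopen hx, hd]
        simp only [Pi.add_apply, Pi.smul_apply, smul_eq_mul]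
        ring
      rw [iteratedDerivWithin_congr hEq ha]

      have c1 : ContDiffOn ℝ ℓ (φ (n - 1)) I := (hsmooth (n - 1)).of_le (by exact_mod_cast le_top)
      have c2 : ContDiffOn ℝ ℓ (φ n) I := (hsmooth n).of_le (by exact_mod_cast le_top)
      have c3 : ContDiffOn ℝ ℓ (φ (n + 1)) I := (hsmooth (n + 1)).of_le (by exact_mod_cast le_top)
      rw [iteratedDerivWithin_add ha hU (c1.const_smul A a ha)
        ((c2.const_smul B).add (c3.const_smul C) a ha)]
      rw [show (fun x => B • φ n x + C • φ (n + 1) x)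
          = ((fun y => B • φ n y) + fun y => C • φ (n + 1) y) from rfl]
      rw [iteratedDerivWithin_add ha hU (c2.const_smul B a ha) (c3.const_smul C a ha)]
      rw [show (fun y => A • φ (n - 1) y) = (A • φ (n - 1)) from rfl,
        show (fun y => B • φ n y) = (B • φ n) from rfl,
        show (fun y => C • φ (n + 1) y) = (C • φ (n + 1)) from rfl,
        iteratedDerivWithin_const_smul ha hU A (c1 a ha),
        iteratedDerivWithin_const_smul ha hU B (c2 a ha),
        iteratedDerivWithin_const_smul ha hU C (c3 a ha),
        ih (n - 1), ih n, ih (n + 1)]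
      simp
  have main : ∀ n ℓ : ℕ, iteratedDeriv ℓ (φ n) a = 0 := by
    intro n ℓ
    have heq : iteratedDerivWithin ℓ (φ n) I a = iteratedDeriv ℓ (φ n) a := by
      rw [iteratedDerivWithin_eq_iteratedFDerivWithin, iteratedDeriv_eq_iteratedFDeriv,
        iteratedFDerivWithin_of_isOpen ℓ hIopen ha]
    rw [← heq]; exact key ℓ n
  exact ⟨main, fun n hn => analyticAt_eventually_zero_of_iteratedDeriv_zero hn (main n)⟩
end

section
/- Let −∞ < a < b < ∞, let w : [a,b] → ℝ be continuously differentiable with w > 0 on (a,b), and let {pₙ}_{n∈ℤ₊} be real polynomials orthonormal with respect to the measure w(x)dx on (a,b). Define φₙ(x) = √(w(x)) pₙ(x) and, assuming each product φₘ′ φₙ is integrable on (a,b), set D_{m,n} = ∫_a^b φₘ′(x) φₙ(x) dx. Then for all m, n ∈ ℤ₊: D_{m,n} + D_{n,m} = w(b) pₘ(b) pₙ(b) − w(a) pₘ(a) pₙ(a). In particular, if w(a) = w(b) = 0 then the differentiation matrix D is skew-symmetric: D_{m,n} = −D_{n,m} for all m, n ∈ ℤ₊. -/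
open MeasureTheory

/-- The W-system function `φ(x) = √(w(x)) p(x)` attached to a weight `w` and a polynomial. -/
noncomputable def wSysFun (w : ℝ → ℝ) (p : Polynomial ℝ) (x : ℝ) : ℝ :=
  Real.sqrt (w x) * p.eval x

/-!
Where `w > 0`, the product `φₘ φₙ = √w pₘ · √w pₙ` equals the `C¹` function `w pₘ pₙ`, whose
derivative is `φₘ′ φₙ + φₙ′ φₘ`. The fundamental theorem of calculus on `[a, b]` then gives
`D_{m,n} + D_{n,m} = [w pₘ pₙ]ₐᵇ`, which vanishes when `w(a) = w(b) = 0`.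
-/

open Filter Set Topology

theorem integral_Ioo_eq_sub_of_hasDerivAt {f f' : ℝ → ℝ} {a b : ℝ} (hab : a ≤ b)
    (hcont : ContinuousOn f (Icc a b)) (hderiv : ∀ x ∈ Ioo a b, HasDerivAt f (f' x) x)
    (hint : IntegrableOn f' (Ioo a b)) :
    ∫ x in Ioo a b, f' x = f b - f a := by
  rw [← integral_Ioc_eq_integral_Ioo, ← intervalIntegral.integral_of_le hab]
  exact intervalIntegral.integral_eq_sub_of_hasDerivAt_of_le hab hcont hderiv
    ((intervalIntegrable_iff_integrableOn_Ioo_of_le hab).2 hint)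

section WSystem

variable {w : ℝ → ℝ} {x : ℝ}

theorem wSysFun_mul_wSysFun (hw : 0 ≤ w x) (p q : Polynomial ℝ) :
    wSysFun w p x * wSysFun w q x = w x * p.eval x * q.eval x := by
  have hsq : Real.sqrt (w x) * Real.sqrt (w x) = w x := Real.mul_self_sqrt hw
  simp only [wSysFun]
  linear_combination p.eval x * q.eval x * hsq

theorem differentiableAt_wSysFun (hw : DifferentiableAt ℝ w x) (hpos : 0 < w x)
    (p : Polynomial ℝ) : DifferentiableAt ℝ (wSysFun w p) x :=
  (hw.sqrt hpos.ne').mul (Polynomial.differentiable p x)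

theorem hasDerivAt_weight_mul_eval_mul_eval (hw : DifferentiableAt ℝ w x) (hpos : 0 < w x)
    (p q : Polynomial ℝ) :
    HasDerivAt (fun y => w y * p.eval y * q.eval y)
      (deriv (wSysFun w p) x * wSysFun w q x + deriv (wSysFun w q) x * wSysFun w p x) x := by
  have hprod : HasDerivAt (fun y => wSysFun w p y * wSysFun w q y)
      (deriv (wSysFun w p) x * wSysFun w q x + wSysFun w p x * deriv (wSysFun w q) x) x :=
    (differentiableAt_wSysFun hw hpos p).hasDerivAt.mul
      (differentiableAt_wSysFun hw hpos q).hasDerivAt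
  have heq : (fun y => wSysFun w p y * wSysFun w q y) =ᶠ[𝓝 x]
      fun y => w y * p.eval y * q.eval y := by
    filter_upwards [hw.continuousAt.eventually (Ioi_mem_nhds hpos)] with y hy
    exact wSysFun_mul_wSysFun (le_of_lt hy) p q
  rw [mul_comm (wSysFun w p x)] at hprod
  exact hprod.congr_of_eventuallyEq heq.symm

theorem integral_deriv_wSysFun_mul_add_integral {a b : ℝ} (hab : a ≤ b)
    (hcont : ContinuousOn w (Icc a b)) (hdiff : ∀ x ∈ Ioo a b, DifferentiableAt ℝ w x)
    (hpos : ∀ x ∈ Ioo a b, 0 < w x) {p q : Polynomial ℝ}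
    (hpq : IntegrableOn (fun x => deriv (wSysFun w p) x * wSysFun w q x) (Ioo a b))
    (hqp : IntegrableOn (fun x => deriv (wSysFun w q) x * wSysFun w p x) (Ioo a b)) :
    (∫ x in Ioo a b, deriv (wSysFun w p) x * wSysFun w q x)
      + (∫ x in Ioo a b, deriv (wSysFun w q) x * wSysFun w p x)
      = w b * p.eval b * q.eval b - w a * p.eval a * q.eval a := by
  rw [← integral_add hpq hqp]
  exact integral_Ioo_eq_sub_of_hasDerivAt hab
    ((hcont.mul p.continuousOn).mul q.continuousOn)
    (fun x hx => hasDerivAt_weight_mul_eval_mul_eval (hdiff x hx) (hpos x hx) p q)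
    (hpq.add hqp)

end WSystem

theorem wSystem_differentiationMatrix_skewSymmetric_general
    (a b : ℝ) (hab : a < b) (w : ℝ → ℝ)
    (hw : ContDiffOn ℝ 1 w (Set.Icc a b))
    (hwpos : ∀ x ∈ Set.Ioo a b, 0 < w x)
    (p : ℕ → Polynomial ℝ)
    (hint : ∀ m n : ℕ, IntegrableOn
      (fun x => deriv (wSysFun w (p m)) x * wSysFun w (p n) x) (Set.Ioo a b)) :
    (∀ m n : ℕ,
      (∫ x in Set.Ioo a b, deriv (wSysFun w (p m)) x * wSysFun w (p n) x)
        + (∫ x in Set.Ioo a b, deriv (wSysFun w (p n)) x * wSysFun w (p m) x)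
        = w b * (p m).eval b * (p n).eval b - w a * (p m).eval a * (p n).eval a) ∧
    (w a = 0 → w b = 0 → ∀ m n : ℕ,
      (∫ x in Set.Ioo a b, deriv (wSysFun w (p m)) x * wSysFun w (p n) x)
        = -(∫ x in Set.Ioo a b, deriv (wSysFun w (p n)) x * wSysFun w (p m) x)) := by
  have hdiff : ∀ x ∈ Ioo a b, DifferentiableAt ℝ w x := fun x hx =>
    (hw.differentiableOn one_ne_zero x (Ioo_subset_Icc_self hx)).differentiableAt
      (Icc_mem_nhds hx.1 hx.2)
  have hsum : ∀ m n : ℕ,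
      (∫ x in Ioo a b, deriv (wSysFun w (p m)) x * wSysFun w (p n) x)
        + (∫ x in Ioo a b, deriv (wSysFun w (p n)) x * wSysFun w (p m) x)
        = w b * (p m).eval b * (p n).eval b - w a * (p m).eval a * (p n).eval a :=
    fun m n => integral_deriv_wSysFun_mul_add_integral hab.le hw.continuousOn hdiff hwpos
      (hint m n) (hint n m)
  refine ⟨hsum, fun ha hb m n => ?_⟩
  have := hsum m n
  rw [ha, hb] at this
  linarith

/-- for a W-system `φₙ = √w pₙ` on `(a,b)` with `w ∈ C¹[a,b]`, `w > 0` on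
`(a,b)` and `{pₙ}` orthonormal w.r.t. `w dx`, the differentiation matrix
`D_{m,n} = ∫_a^b φₘ′ φₙ` satisfies
`D_{m,n} + D_{n,m} = w(b)pₘ(b)pₙ(b) − w(a)pₘ(a)pₙ(a)`; in particular `D` is
skew-symmetric when `w(a) = w(b) = 0`. -/
theorem wSystem_differentiationMatrix_skewSymmetric
    (a b : ℝ) (hab : a < b) (w : ℝ → ℝ)
    (hw : ContDiffOn ℝ 1 w (Set.Icc a b))
    (hwpos : ∀ x ∈ Set.Ioo a b, 0 < w x)
    (p : ℕ → Polynomial ℝ)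
    (horth : ∀ m n : ℕ,
      ∫ x in Set.Ioo a b, (p m).eval x * (p n).eval x * w x = if m = n then 1 else 0)
    (hint : ∀ m n : ℕ, IntegrableOn
      (fun x => deriv (wSysFun w (p m)) x * wSysFun w (p n) x) (Set.Ioo a b)) :
    (∀ m n : ℕ,
      (∫ x in Set.Ioo a b, deriv (wSysFun w (p m)) x * wSysFun w (p n) x)
        + (∫ x in Set.Ioo a b, deriv (wSysFun w (p n)) x * wSysFun w (p m) x)
        = w b * (p m).eval b * (p n).eval b - w a * (p m).eval a * (p n).eval a) ∧
    (w a = 0 → w b = 0 → ∀ m n : ℕ,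
      (∫ x in Set.Ioo a b, deriv (wSysFun w (p m)) x * wSysFun w (p n) x)
        = -(∫ x in Set.Ioo a b, deriv (wSysFun w (p n)) x * wSysFun w (p m) x)) :=
  wSystem_differentiationMatrix_skewSymmetric_general a b hab w hw hwpos p hint
end

section
/- Let q be a real polynomial of even degree 2r (r ≥ 1) with positive leading coefficient, and set w(x) = e^{−q(x)} on ℝ (a Freud weight). Let {pₙ}_{n∈ℤ₊} be the real polynomials orthonormal with respect to w(x)dx on ℝ, and define φₙ(x) = √(w(x)) pₙ(x) and D_{m,n} = ∫_ℝ φₘ′(x) φₙ(x) dx. Then the differentiation matrix is banded with bandwidth 2r−1: D_{m,n} = 0 whenever |m − n| ≥ 2r. -/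
/-!
Since `√w = e^{-q/2}`, the derivative of `φ = √w P` is `√w (P' - q' P / 2)`, so
`D_{m,n} = ∫ (p_m' - q' p_m / 2) p_n w`. The first factor has degree below `m + 2r`, so it is
orthogonal to `p_n` as soon as `n ≥ m + 2r`. Since `e^{-q}` decays faster than any polynomial
grows, integrating `(φ_m φ_n)'` over `ℝ` gives `0`, i.e. `D` is skew-symmetric, which settles
the case `m ≥ n + 2r`.
-/

open MeasureTheory

open Polynomial Filter Topology Asymptotics

namespace Polynomial

theorem tendsto_eval_mul_exp_neg_eval_atTop {Q : ℝ[X]} (hdeg : 1 < Q.degree)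
    (hlead : 0 < Q.leadingCoeff) (P : ℝ[X]) :
    Tendsto (fun x => P.eval x * Real.exp (-Q.eval x)) atTop (𝓝 0) := by
  -- `P e^{-Q} = (P / e^x) e^{-(Q - x)}`, and `Q - x → ∞` because `deg Q ≥ 2`
  have hX : (X : ℝ[X]).degree < Q.degree := by rwa [degree_X]
  have hQX : Tendsto (fun x => (Q - X).eval x) atTop atTop :=
    (Q - X).tendsto_atTop_of_leadingCoeff_nonneg
      (by rw [degree_sub_eq_left_of_degree_lt hX]; exact zero_lt_one.trans hdeg)
      (by rw [leadingCoeff_sub_of_degree_lt hX]; exact hlead.le)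
  have h := P.tendsto_div_exp_atTop.mul
    (Real.tendsto_exp_atBot.comp (tendsto_neg_atTop_atBot.comp hQX))
  rw [zero_mul] at h
  refine h.congr fun x => ?_
  simp only [Function.comp_apply, eval_sub, eval_X, neg_sub, Real.exp_sub, Real.exp_neg]
  field_simp

theorem tendsto_eval_mul_exp_neg_eval_cocompact {q : ℝ[X]} (hdeg : 0 < q.natDegree)
    (heven : Even q.natDegree) (hlead : 0 < q.leadingCoeff) (P : ℝ[X]) :
    Tendsto (fun x => P.eval x * Real.exp (-q.eval x)) (cocompact ℝ) (𝓝 0) := by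
  have hdeg' : 1 < q.degree := by
    obtain ⟨k, hk⟩ := heven
    rw [degree_eq_natDegree (ne_zero_of_natDegree_gt hdeg), hk]
    exact_mod_cast (by omega : 1 < k + k)
  rw [cocompact_eq_atBot_atTop, tendsto_sup]
  refine ⟨?_, tendsto_eval_mul_exp_neg_eval_atTop hdeg' hlead P⟩
  have hlead' : 0 < (q.comp (-X)).leadingCoeff := by
    rwa [comp_neg_X_leadingCoeff_eq, heven.neg_one_pow, one_mul]
  simpa [Function.comp_def] using (tendsto_eval_mul_exp_neg_eval_atTop (by simpa using hdeg')
    hlead' (P.comp (-X))).comp tendsto_neg_atBot_atTop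

theorem integrable_eval_mul_exp_neg_eval {q : ℝ[X]} (hdeg : 0 < q.natDegree)
    (heven : Even q.natDegree) (hlead : 0 < q.leadingCoeff) (P : ℝ[X]) :
    Integrable fun x => P.eval x * Real.exp (-q.eval x) := by
  -- `P e^{-q} = O((1 + x²)⁻¹)` at infinity, since `(1 + x²) P e^{-q} → 0`
  have hbound := (tendsto_eval_mul_exp_neg_eval_cocompact hdeg heven hlead
    ((1 + X ^ 2) * P)).isBigO_one ℝ
  refine (Continuous.locallyIntegrable (by fun_prop)).integrable_of_isBigO_cocompact ?_
    (integrable_inv_one_add_sq.integrableAtFilter _)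
  refine ((hbound.mul (isBigO_refl (fun x : ℝ => (1 + x ^ 2)⁻¹) _)).congr (fun x => ?_)
    (fun x => one_mul _))
  have : (1 + x ^ 2) ≠ 0 := by positivity
  simp only [eval_mul, eval_add, eval_one, eval_pow, eval_X]
  field_simp

theorem degree_derivative_sub_C_mul_derivative_mul_lt (P q : ℝ[X]) (c : ℝ)
    (hq : 0 < q.natDegree) :
    (derivative P - C c * derivative q * P).degree < ↑(P.natDegree + q.natDegree) := by
  refine degree_le_natDegree.trans_lt ?_
  have h₁ := natDegree_derivative_le P
  have h₂ := natDegree_derivative_le q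
  have h₃ := natDegree_C_mul_le c (derivative q)
  have h₄ := natDegree_mul_le (p := C c * derivative q) (q := P)
  have := natDegree_sub_le (derivative P) (C c * derivative q * P)
  exact_mod_cast (by omega : _ < P.natDegree + q.natDegree)

end Polynomial

theorem Polynomial.Sequence.integral_eval_mul_mul_eq_zero_of_degree_lt {w : ℝ → ℝ}
    (hint : ∀ P : ℝ[X], Integrable fun x => P.eval x * w x) (S : Sequence ℝ) {n : ℕ}
    (horth : ∀ j < n, ∫ x, (S j).eval x * (S n).eval x * w x = 0)
    {P : ℝ[X]} (hP : P.degree < n) :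
    ∫ x, (P * S n).eval x * w x = 0 := by
  have hspan : P ∈ Submodule.span ℝ (S '' Set.Iio n) := by
    rw [S.span_degreeLT fun i _ => (leadingCoeff_ne_zero.mpr (S.ne_zero i)).isUnit]
    exact mem_degreeLT.mpr hP
  clear hP
  induction hspan using Submodule.span_induction with
  | mem Q hQ =>
    obtain ⟨j, hj, rfl⟩ := hQ
    simpa only [eval_mul] using horth j hj
  | zero => simp
  | add Q R _ _ hQ hR =>
    simp only [add_mul, eval_add, integral_add (hint _) (hint _)] at hQ hR ⊢
    rw [hQ, hR, add_zero]
  | smul c Q _ hQ =>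
    simp only [smul_mul_assoc, eval_smul, smul_eq_mul, mul_assoc, integral_const_mul] at hQ ⊢
    rw [hQ, mul_zero]

theorem wSysFun_mul_wSysFun_s10 {w : ℝ → ℝ} {x : ℝ} (hw : 0 ≤ w x) (P Q : ℝ[X]) :
    wSysFun w P x * wSysFun w Q x = (P * Q).eval x * w x := by
  simp only [wSysFun, eval_mul]
  linear_combination P.eval x * Q.eval x * Real.mul_self_sqrt hw

theorem hasDerivAt_wSysFun_exp_neg (q P : ℝ[X]) (x : ℝ) :
    HasDerivAt (wSysFun (fun y => Real.exp (-q.eval y)) P)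
      (wSysFun (fun y => Real.exp (-q.eval y))
        (derivative P - C 2⁻¹ * derivative q * P) x) x := by
  have hsqrt : wSysFun (fun y => Real.exp (-q.eval y)) P =
      fun y => Real.exp (-q.eval y / 2) * P.eval y := by
    funext y
    rw [wSysFun, Real.exp_half]
  rw [hsqrt]
  convert! (((q.hasDerivAt x).neg.div_const 2).exp).mul (P.hasDerivAt x) using 1
  simp only [wSysFun, ← Real.exp_half, Pi.neg_apply, eval_sub, eval_mul, eval_C]
  ring

theorem deriv_wSysFun_exp_neg_mul_wSysFun (q P Q : ℝ[X]) :
    (fun x => deriv (wSysFun (fun y => Real.exp (-q.eval y)) P) x *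
        wSysFun (fun y => Real.exp (-q.eval y)) Q x) =
      fun x =>
        ((derivative P - C 2⁻¹ * derivative q * P) * Q).eval x * Real.exp (-q.eval x) := by
  funext x
  rw [(hasDerivAt_wSysFun_exp_neg q P x).deriv,
    wSysFun_mul_wSysFun_s10 (w := fun y => Real.exp (-q.eval y)) (Real.exp_pos _).le]

theorem integral_deriv_wSysFun_exp_neg_mul_add_swap {q : ℝ[X]}
    (hint : ∀ P : ℝ[X], Integrable fun x => P.eval x * Real.exp (-q.eval x)) (P Q : ℝ[X]) :
    (∫ x, deriv (wSysFun (fun y => Real.exp (-q.eval y)) P) x *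
        wSysFun (fun y => Real.exp (-q.eval y)) Q x) +
      ∫ x, deriv (wSysFun (fun y => Real.exp (-q.eval y)) Q) x *
        wSysFun (fun y => Real.exp (-q.eval y)) P x = 0 := by
  set φ := wSysFun (fun y => Real.exp (-q.eval y))
  have hPQ : Integrable fun x => deriv (φ P) x * φ Q x := by
    rw [deriv_wSysFun_exp_neg_mul_wSysFun]; exact hint _
  have hQP : Integrable fun x => deriv (φ Q) x * φ P x := by
    rw [deriv_wSysFun_exp_neg_mul_wSysFun]; exact hint _
  have hprod : Integrable fun x => φ P x * φ Q x := by
    simp only [φ, wSysFun_mul_wSysFun_s10 (w := fun y => Real.exp (-q.eval y)) (Real.exp_pos _).le]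
    exact hint _
  rw [← integral_add hPQ hQP]
  refine integral_eq_zero_of_hasDerivAt_of_integrable (fun x => ?_) (hPQ.add hQP) hprod
  have hP := hasDerivAt_wSysFun_exp_neg q P x
  have hQ := hasDerivAt_wSysFun_exp_neg q Q x
  convert! hP.mul hQ using 1
  rw [hP.deriv, hQ.deriv, mul_comm (φ P x)]

/-- for the Freud weight `w = e^{−q}` with `q` a polynomial of even degree
`2r` (`r ≥ 1`) with positive leading coefficient, the differentiation matrix of the
associated W-system `φₙ = √w pₙ` is banded: `D_{m,n} = ∫_ℝ φₘ′ φₙ = 0` whenever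
`|m − n| ≥ 2r`. -/
theorem freud_weight_differentiationMatrix_banded
    (r : ℕ) (hr : 1 ≤ r) (q : Polynomial ℝ)
    (hqdeg : q.degree = (2 * r : ℕ)) (hqlead : 0 < q.leadingCoeff)
    (p : ℕ → Polynomial ℝ) (hpdeg : ∀ n, (p n).degree = n)
    (horth : ∀ m n : ℕ,
      ∫ x : ℝ, (p m).eval x * (p n).eval x * Real.exp (-q.eval x) = if m = n then 1 else 0) :
    ∀ m n : ℕ, (2 * r : ℤ) ≤ |(m : ℤ) - (n : ℤ)| →
      ∫ x : ℝ, deriv (wSysFun (fun y => Real.exp (-q.eval y)) (p m)) x *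
          wSysFun (fun y => Real.exp (-q.eval y)) (p n) x = 0 := by
  intro m n hmn
  have hqnat : q.natDegree = 2 * r := natDegree_eq_of_degree_eq_some hqdeg
  have hint := integrable_eval_mul_exp_neg_eval (by omega) ⟨r, by omega⟩ hqlead
  let S : Sequence ℝ := ⟨p, hpdeg⟩
  have hband : ∀ m n : ℕ, m + 2 * r ≤ n →
      ∫ x : ℝ, deriv (wSysFun (fun y => Real.exp (-q.eval y)) (p m)) x *
        wSysFun (fun y => Real.exp (-q.eval y)) (p n) x = 0 := by
    intro m n hmn
    rw [deriv_wSysFun_exp_neg_mul_wSysFun]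
    refine S.integral_eval_mul_mul_eq_zero_of_degree_lt hint
      (fun j hj => (horth j n).trans (if_neg hj.ne)) ?_
    refine (degree_derivative_sub_C_mul_derivative_mul_lt _ _ _ (by omega)).trans_le ?_
    rw [natDegree_eq_of_degree_eq_some (hpdeg m), hqnat]
    exact_mod_cast hmn
  rcases le_abs'.mp hmn with h | h
  · exact hband m n (by omega)
  · linarith [integral_deriv_wSysFun_exp_neg_mul_add_swap hint (p m) (p n),
      hband n m (by omega)]
end
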